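/- For all τ, z in the stated domain, the following identity holds: −y ∏_{n≥1} (1−q^n)² (1+y⁻²q^{n−1}) (1+y²q^n) (1+iy⁻³q^{n−1}) (1−iy³q^n) / [ (1−iω²y⁻¹q^{n−1}) (1+iωyq^n) (1+iy⁻¹q^{n−1}) (1−iyq^n) (1−iωy⁻¹q^{n−1}) (1+iω²yq^n) ] − y ∏_{n≥1} (1−q^n)² (1+y⁻²q^{n−1}) (1+y²q^n) (1−iy⁻³q^{n−1}) (1+iy³q^n) / [ (1+iω²y⁻¹q^{n−1}) (1−iωyq^n) (1−iy⁻¹q^{n−1}) (1+iyq^n) (1+iωy⁻¹q^{n−1}) (1−iω²yq^n) ] = i ( η(6τ) θ₂(τ,2z) / ( η(τ)³ θ₂(6τ,6z) ) ) · [ θ₁(τ,z+1/12) θ₁(τ,z+1/4) θ₁(τ,z+5/12) θ₁(τ,3z−1/4) − θ₁(τ,z−1/12) θ₁(τ,z−1/4) θ₁(τ,z−5/12) θ₁(τ,3z+1/4) ]. (This is the identity establishing that the graded trace attached to the classes 12A and 12B of the umbral group G⁽⁵⁾ equals the umbral meromorphic Jacobi form ψ⁽⁵⁾_{12AB}.)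 -/

import Mathlib

open Complex

/-- Dedekind eta function via its infinite product:
    `η(τ) = e^{πiτ/12} ∏_{n≥1} (1 − e^{2πinτ})`. -/
noncomputable def Eta (τ : ℂ) : ℂ :=
  Complex.exp (Real.pi * Complex.I * τ / 12) *
    ∏' n : ℕ, (1 - Complex.exp (2 * Real.pi * Complex.I * ((n : ℂ) + 1) * τ))

/-- Jacobi theta function `θ₁` via its triple product expansion. -/
noncomputable def Theta1 (τ w : ℂ) : ℂ :=
  -Complex.I * Complex.exp (Real.pi * Complex.I * τ / 4) *
    Complex.exp (Real.pi * Complex.I * w) *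
    ∏' n : ℕ,
      ((1 - Complex.exp (-(2 * Real.pi * Complex.I * w)) *
            Complex.exp (2 * Real.pi * Complex.I * (n : ℂ) * τ)) *
       (1 - Complex.exp (2 * Real.pi * Complex.I * w) *
            Complex.exp (2 * Real.pi * Complex.I * ((n : ℂ) + 1) * τ)) *
       (1 - Complex.exp (2 * Real.pi * Complex.I * ((n : ℂ) + 1) * τ)))

/-- Jacobi theta function `θ₂` via its triple product expansion. -/
noncomputable def Theta2 (τ w : ℂ) : ℂ :=
  Complex.exp (Real.pi * Complex.I * τ / 4) *
    Complex.exp (Real.pi * Complex.I * w) *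
    ∏' n : ℕ,
      ((1 + Complex.exp (-(2 * Real.pi * Complex.I * w)) *
            Complex.exp (2 * Real.pi * Complex.I * (n : ℂ) * τ)) *
       (1 + Complex.exp (2 * Real.pi * Complex.I * w) *
            Complex.exp (2 * Real.pi * Complex.I * ((n : ℂ) + 1) * τ)) *
       (1 - Complex.exp (2 * Real.pi * Complex.I * ((n : ℂ) + 1) * τ)))

/-- A primitive cube root of unity, `ω = e^{2πi/3}`. -/
noncomputable def omega3 : ℂ := Complex.exp (2 * Real.pi * Complex.I / 3)

/-!
Put `q = e^{2πiτ}` and `y = e^{2πiz}`. Each θ and η on the right is an exponential prefactor times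
a product of Jacobi factors `(1 - x⁻¹qⁿ)(1 - xqⁿ⁺¹)(1 - qⁿ⁺¹)`, and the shifts `z ± k/12` (`k` odd)
turn `x` into `y` times `±i`, `±iω` or `±iω²`, the six roots of `X⁶ = -1`. So the six denominator
factors of a left-hand product, multiplied by the Jacobi factors of the three θ₁'s with the
complementary shifts, give `(1 + y⁻⁶q⁶ⁿ)(1 + y⁶q⁶ⁿ⁺⁶)(1 - qⁿ⁺¹)³`, essentially the Jacobi factor of
`θ₂(6τ, 6z)`. Hence both left-hand products are, factor by factor, quotients of the θ- and
η-products on the right (the second one is the first with `i` replaced by `-i`), and the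
exponential prefactors cancel to `-y`.
-/

open scoped Real

section GeometricProducts

variable {K : Type*} [NormedField K] {r : K}

lemma summable_norm_mul_pow (hr : ‖r‖ < 1) (c : K) : Summable fun n : ℕ ↦ ‖c * r ^ n‖ := by
  simpa only [norm_mul, norm_pow] using
    (summable_geometric_of_lt_one (norm_nonneg r) hr).mul_left ‖c‖

lemma multipliable_one_add_mul_pow [CompleteSpace K] (hr : ‖r‖ < 1) (c : K) :
    Multipliable fun n : ℕ ↦ 1 + c * r ^ n :=
  multipliable_one_add_of_summable (summable_norm_mul_pow hr c)

lemma one_add_mul_pow_ne_zero {c : K} (hr : ‖r‖ < 1) (hc : ‖c‖ < 1) (n : ℕ) :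
    1 + c * r ^ n ≠ 0 := by
  have hlt : ‖c * r ^ n‖ < 1 := by
    rw [norm_mul, norm_pow]
    exact (mul_le_of_le_one_right (norm_nonneg c) (pow_le_one₀ (norm_nonneg r) hr.le)).trans_lt hc
  intro h
  rw [eq_neg_of_add_eq_zero_right h, norm_neg, norm_one] at hlt
  exact hlt.false

lemma tprod_one_add_mul_pow_ne_zero [CompleteSpace K] {c : K} (hr : ‖r‖ < 1) (hc : ‖c‖ < 1) :
    ∏' n : ℕ, (1 + c * r ^ n) ≠ 0 :=
  tprod_one_add_ne_zero_of_summable (one_add_mul_pow_ne_zero hr hc) (summable_norm_mul_pow hr c)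

lemma one_sub_pow_succ_eq (r : K) (n : ℕ) : 1 - r ^ (n + 1) = 1 + -r * r ^ n := by ring

lemma multipliable_one_sub_pow_succ [CompleteSpace K] (hr : ‖r‖ < 1) :
    Multipliable fun n : ℕ ↦ 1 - r ^ (n + 1) := by
  simpa only [one_sub_pow_succ_eq] using multipliable_one_add_mul_pow hr (-r)

lemma one_sub_pow_succ_ne_zero (hr : ‖r‖ < 1) (n : ℕ) : 1 - r ^ (n + 1) ≠ 0 := by
  rw [one_sub_pow_succ_eq]
  exact one_add_mul_pow_ne_zero hr (by rwa [norm_neg]) n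

lemma tprod_one_sub_pow_succ_ne_zero [CompleteSpace K] (hr : ‖r‖ < 1) :
    ∏' n : ℕ, (1 - r ^ (n + 1)) ≠ 0 := by
  simpa only [one_sub_pow_succ_eq] using
    tprod_one_add_mul_pow_ne_zero hr (c := -r) (by rwa [norm_neg])

end GeometricProducts

def jacobiFactor {K : Type*} [Field K] (q x : K) (n : ℕ) : K :=
  (1 - x⁻¹ * q ^ n) * (1 - x * q ^ (n + 1)) * (1 - q ^ (n + 1))

section JacobiFactor

variable {K : Type*} [Field K]

lemma jacobiFactor_eq_prod_one_add (q x : K) (n : ℕ) :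
    jacobiFactor q x n = (1 + -x⁻¹ * q ^ n) * (1 + -(x * q) * q ^ n) * (1 + -q * q ^ n) := by
  rw [jacobiFactor]; ring

lemma jacobiFactor_mul_left {c c' : K} (h : c' * c = 1) (q x : K) (n : ℕ) :
    jacobiFactor q (c * x) n =
      (1 - c' * x⁻¹ * q ^ n) * (1 - c * x * q ^ (n + 1)) * (1 - q ^ (n + 1)) := by
  rw [jacobiFactor, mul_inv, inv_eq_of_mul_eq_one_left h]

end JacobiFactor

section JacobiProduct

variable {K : Type*} [NormedField K] {q x : K}

lemma multipliable_jacobiFactor [CompleteSpace K] (hq : ‖q‖ < 1) (x : K) :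
    Multipliable (jacobiFactor q x) :=
  (((multipliable_one_add_mul_pow hq _).mul (multipliable_one_add_mul_pow hq _)).mul
    (multipliable_one_add_mul_pow hq _)).congr fun n ↦ (jacobiFactor_eq_prod_one_add q x n).symm

lemma jacobiFactor_ne_zero (hq : ‖q‖ < 1) (hx : ‖x⁻¹‖ < 1) (hxq : ‖x * q‖ < 1) (n : ℕ) :
    jacobiFactor q x n ≠ 0 := by
  rw [jacobiFactor_eq_prod_one_add]
  refine mul_ne_zero (mul_ne_zero ?_ ?_) ?_ <;>
    exact one_add_mul_pow_ne_zero hq (by rwa [norm_neg]) n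

lemma tprod_jacobiFactor_ne_zero [CompleteSpace K] (hq : ‖q‖ < 1) (hx : ‖x⁻¹‖ < 1)
    (hxq : ‖x * q‖ < 1) :
    ∏' n, jacobiFactor q x n ≠ 0 := by
  have hm := multipliable_one_add_mul_pow hq
  simp only [jacobiFactor_eq_prod_one_add]
  rw [((hm _).mul (hm _)).tprod_mul (hm _), (hm _).tprod_mul (hm _)]
  refine mul_ne_zero (mul_ne_zero ?_ ?_) ?_ <;>
    exact tprod_one_add_mul_pow_ne_zero hq (by rwa [norm_neg])

end JacobiProduct

section SixfoldProduct

variable {R : Type*} [CommRing R] {i ω : R}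

lemma prod_six_eq_one_add_pow_six (hi : i ^ 2 = -1) (hω : 1 + ω + ω ^ 2 = 0) (X : R) :
    (1 - i * ω ^ 2 * X) * (1 + i * ω * X) * (1 + i * X) * (1 - i * X) * (1 - i * ω * X) *
      (1 + i * ω ^ 2 * X) = 1 + X ^ 6 := by
  have hω3 : ω ^ 3 = 1 := by linear_combination (ω - 1) * hω
  calc _ = (1 - i ^ 2 * ω ^ 4 * X ^ 2) * (1 - i ^ 2 * X ^ 2) * (1 - i ^ 2 * ω ^ 2 * X ^ 2) := by
        ring
    _ = (1 + ω ^ 4 * X ^ 2) * (1 + X ^ 2) * (1 + ω ^ 2 * X ^ 2) := by rw [hi]; ring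
    _ = 1 + X ^ 6 := by
      linear_combination (X ^ 2 * ω + X ^ 4 * ω ^ 3 + X ^ 6 * (ω ^ 3 + 1)) * hω3 +
        (X ^ 2 + X ^ 4 * ω ^ 2) * hω

lemma prod_six_mul_prod_six_eq (hi : i ^ 2 = -1) (hω : 1 + ω + ω ^ 2 = 0) (X Y e : R) :
    (1 - i * ω ^ 2 * X) * (1 + i * ω * Y) * (1 + i * X) * (1 - i * Y) * (1 - i * ω * X) *
        (1 + i * ω ^ 2 * Y) *
      ((1 + i * ω * X) * (1 - i * ω ^ 2 * Y) * e * ((1 - i * X) * (1 + i * Y) * e) *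
        ((1 + i * ω ^ 2 * X) * (1 - i * ω * Y) * e)) =
    (1 + X ^ 6) * (1 + Y ^ 6) * e ^ 3 := by
  rw [← prod_six_eq_one_add_pow_six hi hω X, ← prod_six_eq_one_add_pow_six hi hω Y, pow_three]
  ac_rfl

end SixfoldProduct

section Termwise

variable {K : Type*} [Field K] {i ω : K}

lemma denominator_mul_jacobiFactor (hi : i ^ 2 = -1) (hω : 1 + ω + ω ^ 2 = 0) (q y : K) (n : ℕ) :
    (1 - i * ω ^ 2 * y⁻¹ * q ^ n) * (1 + i * ω * y * q ^ (n + 1)) * (1 + i * y⁻¹ * q ^ n) *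
        (1 - i * y * q ^ (n + 1)) * (1 - i * ω * y⁻¹ * q ^ n) * (1 + i * ω ^ 2 * y * q ^ (n + 1)) *
      (jacobiFactor q (i * ω ^ 2 * y) n * jacobiFactor q (-i * y) n *
        jacobiFactor q (i * ω * y) n) * (1 - (q ^ 6) ^ (n + 1)) =
    jacobiFactor (q ^ 6) (-y ^ 6) n * (1 - q ^ (n + 1)) ^ 3 := by
  have hω3 : ω ^ 3 = 1 := by linear_combination (ω - 1) * hω
  have h₁ : -(i * ω) * (i * ω ^ 2) = 1 := by linear_combination (-ω ^ 3) * hi + hω3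
  have h₂ : i * -i = 1 := by linear_combination -hi
  have h₃ : -(i * ω ^ 2) * (i * ω) = 1 := by linear_combination (-ω ^ 3) * hi + hω3
  set X := y⁻¹ * q ^ n
  set Y := y * q ^ (n + 1)
  have hD : (1 - i * ω ^ 2 * y⁻¹ * q ^ n) * (1 + i * ω * y * q ^ (n + 1)) *
        (1 + i * y⁻¹ * q ^ n) * (1 - i * y * q ^ (n + 1)) * (1 - i * ω * y⁻¹ * q ^ n) *
        (1 + i * ω ^ 2 * y * q ^ (n + 1)) =
      (1 - i * ω ^ 2 * X) * (1 + i * ω * Y) * (1 + i * X) * (1 - i * Y) * (1 - i * ω * X) *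
        (1 + i * ω ^ 2 * Y) := by
    ring
  have hJ : jacobiFactor q (i * ω ^ 2 * y) n * jacobiFactor q (-i * y) n *
        jacobiFactor q (i * ω * y) n =
      (1 + i * ω * X) * (1 - i * ω ^ 2 * Y) * (1 - q ^ (n + 1)) *
        ((1 - i * X) * (1 + i * Y) * (1 - q ^ (n + 1))) *
        ((1 + i * ω ^ 2 * X) * (1 - i * ω * Y) * (1 - q ^ (n + 1))) := by
    rw [jacobiFactor_mul_left h₁, jacobiFactor_mul_left h₂, jacobiFactor_mul_left h₃]
    ring
  have h₆ : jacobiFactor (q ^ 6) (-y ^ 6) n =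
      (1 + X ^ 6) * (1 + Y ^ 6) * (1 - (q ^ 6) ^ (n + 1)) := by
    rw [jacobiFactor]; ring
  rw [hD, hJ, prod_six_mul_prod_six_eq hi hω, h₆]
  ring

lemma numerator_eq_jacobiFactor (hi : i ^ 2 = -1) (q y : K) (n : ℕ) :
    (1 - q ^ (n + 1)) ^ 2 * (1 + y⁻¹ ^ 2 * q ^ n) * (1 + y ^ 2 * q ^ (n + 1)) *
        (1 + i * y⁻¹ ^ 3 * q ^ n) * (1 - i * y ^ 3 * q ^ (n + 1)) =
      jacobiFactor q (-y ^ 2) n * jacobiFactor q (i * y ^ 3) n := by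
  rw [jacobiFactor_mul_left (c' := -i) (by linear_combination -hi), jacobiFactor]
  ring

lemma quotient_eq_jacobiFactor (hi : i ^ 2 = -1) (hω : 1 + ω + ω ^ 2 = 0) (q y : K) (n : ℕ)
    (h₆ : jacobiFactor (q ^ 6) (-y ^ 6) n ≠ 0) (h₁ : 1 - q ^ (n + 1) ≠ 0) :
    (1 - q ^ (n + 1)) ^ 2 * (1 + y⁻¹ ^ 2 * q ^ n) * (1 + y ^ 2 * q ^ (n + 1)) *
        (1 + i * y⁻¹ ^ 3 * q ^ n) * (1 - i * y ^ 3 * q ^ (n + 1)) /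
      ((1 - i * ω ^ 2 * y⁻¹ * q ^ n) * (1 + i * ω * y * q ^ (n + 1)) * (1 + i * y⁻¹ * q ^ n) *
        (1 - i * y * q ^ (n + 1)) * (1 - i * ω * y⁻¹ * q ^ n) *
        (1 + i * ω ^ 2 * y * q ^ (n + 1))) =
    (1 - (q ^ 6) ^ (n + 1)) * jacobiFactor q (-y ^ 2) n *
        (jacobiFactor q (i * ω ^ 2 * y) n * jacobiFactor q (-i * y) n *
          jacobiFactor q (i * ω * y) n * jacobiFactor q (i * y ^ 3) n) /
      (jacobiFactor (q ^ 6) (-y ^ 6) n * (1 - q ^ (n + 1)) ^ 3) := by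
  have key := denominator_mul_jacobiFactor hi hω q y n
  have hden := mul_ne_zero h₆ (pow_ne_zero 3 h₁)
  rw [div_eq_div_iff (left_ne_zero_of_mul (left_ne_zero_of_mul (key ▸ hden))) hden, ← key,
    numerator_eq_jacobiFactor hi]
  ring

end Termwise

lemma tprod_quotient_eq {K : Type*} [NormedField K] [CompleteSpace K] {i ω : K}
    (hi : i ^ 2 = -1) (hω : 1 + ω + ω ^ 2 = 0) {q y : K}
    (hq : ‖q‖ < 1) (hy : ‖y⁻¹‖ < 1) (hyq : ‖y * q‖ < 1) :
    ∏' n : ℕ, ((1 - q ^ (n + 1)) ^ 2 * (1 + y⁻¹ ^ 2 * q ^ n) * (1 + y ^ 2 * q ^ (n + 1)) *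
        (1 + i * y⁻¹ ^ 3 * q ^ n) * (1 - i * y ^ 3 * q ^ (n + 1)) /
      ((1 - i * ω ^ 2 * y⁻¹ * q ^ n) * (1 + i * ω * y * q ^ (n + 1)) * (1 + i * y⁻¹ * q ^ n) *
        (1 - i * y * q ^ (n + 1)) * (1 - i * ω * y⁻¹ * q ^ n) *
        (1 + i * ω ^ 2 * y * q ^ (n + 1)))) =
    (∏' n : ℕ, (1 - (q ^ 6) ^ (n + 1))) * (∏' n, jacobiFactor q (-y ^ 2) n) *
        ((∏' n, jacobiFactor q (i * ω ^ 2 * y) n) * (∏' n, jacobiFactor q (-i * y) n) *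
          (∏' n, jacobiFactor q (i * ω * y) n) * (∏' n, jacobiFactor q (i * y ^ 3) n)) /
      ((∏' n, jacobiFactor (q ^ 6) (-y ^ 6) n) * (∏' n : ℕ, (1 - q ^ (n + 1))) ^ 3) := by
  have hq₆ : ‖q ^ 6‖ < 1 := by rw [norm_pow]; exact pow_lt_one₀ (norm_nonneg q) hq (by norm_num)
  have hy₆ : ‖(-y ^ 6)⁻¹‖ < 1 := by
    rw [inv_neg, norm_neg, ← inv_pow, norm_pow]
    exact pow_lt_one₀ (norm_nonneg _) hy (by norm_num)
  have hyq₆ : ‖-y ^ 6 * q ^ 6‖ < 1 := by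
    rw [neg_mul, norm_neg, ← mul_pow, norm_pow]
    exact pow_lt_one₀ (norm_nonneg _) hyq (by norm_num)
  rw [tprod_congr fun n ↦ quotient_eq_jacobiFactor hi hω q y n
    (jacobiFactor_ne_zero hq₆ hy₆ hyq₆ n) (one_sub_pow_succ_ne_zero hq n)]
  have hJ x := (multipliable_jacobiFactor hq x).hasProd
  refine HasProd.tprod_eq (HasProd.div₀ ?_ ?_ ?_)
  · exact ((multipliable_one_sub_pow_succ hq₆).hasProd.mul (hJ _)).mul
      ((((hJ _).mul (hJ _)).mul (hJ _)).mul (hJ _))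
  · exact (multipliable_jacobiFactor hq₆ _).hasProd.mul
      ((multipliable_one_sub_pow_succ hq).hasProd.pow 3)
  · exact mul_ne_zero (tprod_jacobiFactor_ne_zero hq₆ hy₆ hyq₆)
      (pow_ne_zero 3 (tprod_one_sub_pow_succ_ne_zero hq))

lemma cexp_eq_pow {a b : ℂ} (k : ℕ) (h : a = k * b) : cexp a = cexp b ^ k := by
  rw [h, exp_nat_mul]

lemma cexp_two_pi_I_mul_nat_mul (n : ℕ) (τ : ℂ) :
    cexp (2 * π * I * n * τ) = cexp (2 * π * I * τ) ^ n :=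
  cexp_eq_pow n (by ring)

lemma cexp_two_pi_I_mul_succ_mul (n : ℕ) (τ : ℂ) :
    cexp (2 * π * I * ((n : ℂ) + 1) * τ) = cexp (2 * π * I * τ) ^ (n + 1) := by
  rw [← Nat.cast_add_one, cexp_two_pi_I_mul_nat_mul]

lemma norm_cexp_two_pi_I_mul_lt_one {w : ℂ} (hw : 0 < w.im) : ‖cexp (2 * π * I * w)‖ < 1 := by
  rw [norm_exp, Real.exp_lt_one_iff]
  simp only [mul_re, mul_im, ofReal_re, ofReal_im, I_re, I_im, re_ofNat, im_ofNat]
  nlinarith [Real.pi_pos]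

lemma one_add_omega3_add_sq : 1 + omega3 + omega3 ^ 2 = 0 := by
  have := (isPrimitiveRoot_exp 3 (by norm_num)).geom_sum_eq_zero (by norm_num)
  simpa [Finset.sum_range_succ, omega3, add_assoc] using this

lemma omega3_pow_three : omega3 ^ 3 = 1 := by
  linear_combination (omega3 - 1) * one_add_omega3_add_sq

lemma cexp_pi_I_div_six : cexp (π * I / 6) = -(I * omega3) := by
  rw [show π * I / 6 = 2 * π * I / 3 - π / 2 * I by ring, exp_sub, exp_pi_div_two_mul_I, div_I,
    omega3, mul_comm]

lemma cexp_two_pi_I_div_three : cexp (2 * π * I / 3) = omega3 := rfl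

lemma cexp_neg_two_pi_I_div_three : cexp (-(2 * π * I / 3)) = omega3 ^ 2 := by
  rw [exp_neg, cexp_two_pi_I_div_three]
  exact inv_eq_of_mul_eq_one_left (by linear_combination omega3_pow_three)

lemma cexp_neg_pi_I_div_six : cexp (-(π * I / 6)) = I * omega3 ^ 2 := by
  rw [exp_neg, cexp_pi_I_div_six]
  exact inv_eq_of_mul_eq_one_left (by linear_combination (-omega3 ^ 3) * I_sq + omega3_pow_three)

lemma eta_eq (τ : ℂ) :
    Eta τ = cexp (π * I * τ / 12) * ∏' n : ℕ, (1 - cexp (2 * π * I * τ) ^ (n + 1)) := by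
  simp only [Eta, cexp_two_pi_I_mul_succ_mul]

lemma theta1_eq (τ w : ℂ) :
    Theta1 τ w = -I * cexp (π * I * τ / 4) * cexp (π * I * w) *
      ∏' n, jacobiFactor (cexp (2 * π * I * τ)) (cexp (2 * π * I * w)) n := by
  simp only [Theta1, jacobiFactor, exp_neg, cexp_two_pi_I_mul_nat_mul, cexp_two_pi_I_mul_succ_mul]

lemma theta2_eq (τ w : ℂ) :
    Theta2 τ w = cexp (π * I * τ / 4) * cexp (π * I * w) *
      ∏' n, jacobiFactor (cexp (2 * π * I * τ)) (-cexp (2 * π * I * w)) n := by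
  simp only [Theta2, jacobiFactor, exp_neg, inv_neg, neg_mul, sub_neg_eq_add,
    cexp_two_pi_I_mul_nat_mul, cexp_two_pi_I_mul_succ_mul]

lemma prod_four_theta1_eq (τ w₁ w₂ w₃ w₄ : ℂ) :
    Theta1 τ w₁ * Theta1 τ w₂ * Theta1 τ w₃ * Theta1 τ w₄ =
      cexp (π * I * τ) * cexp (π * I * (w₁ + w₂ + w₃ + w₄)) *
        ((∏' n, jacobiFactor (cexp (2 * π * I * τ)) (cexp (2 * π * I * w₁)) n) *
          (∏' n, jacobiFactor (cexp (2 * π * I * τ)) (cexp (2 * π * I * w₂)) n) *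
          (∏' n, jacobiFactor (cexp (2 * π * I * τ)) (cexp (2 * π * I * w₃)) n) *
          (∏' n, jacobiFactor (cexp (2 * π * I * τ)) (cexp (2 * π * I * w₄)) n)) := by
  rw [cexp_eq_pow 4 (b := π * I * τ / 4) (by ring), mul_add, mul_add, mul_add, exp_add, exp_add,
    exp_add]
  simp only [theta1_eq]
  ring_nf
  rw [I_pow_four]
  ring

lemma eta_mul_theta2_div_eq {τ z q y : ℂ} (hq : q = cexp (2 * π * I * τ))
    (hy : y = cexp (2 * π * I * z)) :
    Eta (6 * τ) * Theta2 τ (2 * z) / (Eta τ ^ 3 * Theta2 (6 * τ) (6 * z)) =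
      (∏' n : ℕ, (1 - (q ^ 6) ^ (n + 1))) * (∏' n, jacobiFactor q (-y ^ 2) n) /
        ((∏' n, jacobiFactor (q ^ 6) (-y ^ 6) n) * (∏' n : ℕ, (1 - q ^ (n + 1))) ^ 3) /
        (cexp (π * I * τ) * y ^ 2) := by
  set A := cexp (π * I * τ / 12)
  have hA : A ≠ 0 := exp_ne_zero _
  have hy₀ : y ≠ 0 := hy ▸ exp_ne_zero _
  have hq₆ : cexp (2 * π * I * (6 * τ)) = q ^ 6 := hq ▸ cexp_eq_pow 6 (by ring)
  have hy₂ : cexp (2 * π * I * (2 * z)) = y ^ 2 := hy ▸ cexp_eq_pow 2 (by ring)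
  have hy₆ : cexp (2 * π * I * (6 * z)) = y ^ 6 := hy ▸ cexp_eq_pow 6 (by ring)
  have hy₁ : cexp (π * I * (2 * z)) = y := hy ▸ congrArg cexp (by ring)
  have hy₃ : cexp (π * I * (6 * z)) = y ^ 3 := hy ▸ cexp_eq_pow 3 (by ring)
  have hA₃ : cexp (π * I * τ / 4) = A ^ 3 := cexp_eq_pow 3 (by ring)
  have hA₆ : cexp (π * I * (6 * τ) / 12) = A ^ 6 := cexp_eq_pow 6 (by ring)
  have hA₁₂ : cexp (π * I * τ) = A ^ 12 := cexp_eq_pow 12 (by ring)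
  have hA₁₈ : cexp (π * I * (6 * τ) / 4) = A ^ 18 := cexp_eq_pow 18 (by ring)
  rw [eta_eq, eta_eq, theta2_eq, theta2_eq, ← hq, hq₆, hy₂, hy₆, hy₁, hy₃, hA₃, hA₆, hA₁₂, hA₁₈]
  field_simp
  ring

lemma prod_four_theta1_add_twelfths {τ z q y : ℂ} (hq : q = cexp (2 * π * I * τ))
    (hy : y = cexp (2 * π * I * z)) :
    Theta1 τ (z + 1 / 12) * Theta1 τ (z + 1 / 4) * Theta1 τ (z + 5 / 12) *
        Theta1 τ (3 * z - 1 / 4) =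
      I * cexp (π * I * τ) * y ^ 3 *
        ((∏' n, jacobiFactor q (-(I * omega3 * y)) n) * (∏' n, jacobiFactor q (I * y) n) *
          (∏' n, jacobiFactor q (-(I * omega3 ^ 2 * y)) n) *
          (∏' n, jacobiFactor q (-(I * y ^ 3)) n)) := by
  have hy₃ : cexp (3 * (2 * π * I * z)) = y ^ 3 := hy ▸ cexp_eq_pow 3 (by ring)
  have hx₁ : cexp (2 * π * I * (z + 1 / 12)) = -(I * omega3 * y) := by
    rw [hy, show 2 * π * I * (z + 1 / 12) = 2 * π * I * z + π * I / 6 by ring, exp_add,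
      cexp_pi_I_div_six]
    ring
  have hx₃ : cexp (2 * π * I * (z + 1 / 4)) = I * y := by
    rw [hy, show 2 * π * I * (z + 1 / 4) = 2 * π * I * z + π / 2 * I by ring, exp_add,
      exp_pi_div_two_mul_I, mul_comm]
  have hx₅ : cexp (2 * π * I * (z + 5 / 12)) = -(I * omega3 ^ 2 * y) := by
    rw [show 2 * π * I * (z + 5 / 12) = 2 * π * I * (z + 1 / 12) + 2 * π * I / 3 by ring,
      exp_add, hx₁, cexp_two_pi_I_div_three]
    ring
  have hx₉ : cexp (2 * π * I * (3 * z - 1 / 4)) = -(I * y ^ 3) := by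
    rw [show 2 * π * I * (3 * z - 1 / 4) = 3 * (2 * π * I * z) + -π / 2 * I by ring, exp_add,
      exp_neg_pi_div_two_mul_I, hy₃]
    ring
  have hs : cexp (π * I * (z + 1 / 12 + (z + 1 / 4) + (z + 5 / 12) + (3 * z - 1 / 4))) =
      I * y ^ 3 := by
    rw [show π * I * (z + 1 / 12 + (z + 1 / 4) + (z + 5 / 12) + (3 * z - 1 / 4)) =
      3 * (2 * π * I * z) + π / 2 * I by ring, exp_add, exp_pi_div_two_mul_I, hy₃, mul_comm]
  rw [prod_four_theta1_eq, ← hq, hx₁, hx₃, hx₅, hx₉, hs]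
  ring

lemma prod_four_theta1_sub_twelfths {τ z q y : ℂ} (hq : q = cexp (2 * π * I * τ))
    (hy : y = cexp (2 * π * I * z)) :
    Theta1 τ (z - 1 / 12) * Theta1 τ (z - 1 / 4) * Theta1 τ (z - 5 / 12) *
        Theta1 τ (3 * z + 1 / 4) =
      -I * cexp (π * I * τ) * y ^ 3 *
        ((∏' n, jacobiFactor q (I * omega3 ^ 2 * y) n) * (∏' n, jacobiFactor q (-I * y) n) *
          (∏' n, jacobiFactor q (I * omega3 * y) n) * (∏' n, jacobiFactor q (I * y ^ 3) n)) := by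
  have hy₃ : cexp (3 * (2 * π * I * z)) = y ^ 3 := hy ▸ cexp_eq_pow 3 (by ring)
  have hx₁ : cexp (2 * π * I * (z - 1 / 12)) = I * omega3 ^ 2 * y := by
    rw [hy, show 2 * π * I * (z - 1 / 12) = 2 * π * I * z + -(π * I / 6) by ring, exp_add,
      cexp_neg_pi_I_div_six, mul_comm]
  have hx₃ : cexp (2 * π * I * (z - 1 / 4)) = -I * y := by
    rw [hy, show 2 * π * I * (z - 1 / 4) = 2 * π * I * z + -π / 2 * I by ring, exp_add,
      exp_neg_pi_div_two_mul_I, mul_comm]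
  have hx₅ : cexp (2 * π * I * (z - 5 / 12)) = I * omega3 * y := by
    rw [show 2 * π * I * (z - 5 / 12) = 2 * π * I * (z - 1 / 12) + -(2 * π * I / 3) by ring,
      exp_add, hx₁, cexp_neg_two_pi_I_div_three]
    linear_combination (I * omega3 * y) * omega3_pow_three
  have hx₉ : cexp (2 * π * I * (3 * z + 1 / 4)) = I * y ^ 3 := by
    rw [show 2 * π * I * (3 * z + 1 / 4) = 3 * (2 * π * I * z) + π / 2 * I by ring, exp_add,
      exp_pi_div_two_mul_I, hy₃, mul_comm]
  have hs : cexp (π * I * (z - 1 / 12 + (z - 1 / 4) + (z - 5 / 12) + (3 * z + 1 / 4))) =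
      -I * y ^ 3 := by
    rw [show π * I * (z - 1 / 12 + (z - 1 / 4) + (z - 5 / 12) + (3 * z + 1 / 4)) =
      3 * (2 * π * I * z) + -π / 2 * I by ring, exp_add, exp_neg_pi_div_two_mul_I, hy₃, mul_comm]
  rw [prod_four_theta1_eq, ← hq, hx₁, hx₃, hx₅, hx₉, hs]
  ring

/-- Umbral moonshine identity for the classes 12A, 12B of G⁽⁵⁾: the graded trace equals ψ⁽⁵⁾_{12AB}. -/
theorem stmt_19 (τ z : ℂ) (h1 : 0 < -z.im) (h2 : -z.im < τ.im)
    (q y : ℂ)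
    (hq : q = Complex.exp (2 * Real.pi * Complex.I * τ))
    (hy : y = Complex.exp (2 * Real.pi * Complex.I * z)) :
    -y * (∏' n : ℕ,
      ((1 - q ^ (n + 1)) ^ 2 * (1 + y⁻¹ ^ 2 * q ^ n) * (1 + y ^ 2 * q ^ (n + 1)) *
          (1 + Complex.I * y⁻¹ ^ 3 * q ^ n) * (1 - Complex.I * y ^ 3 * q ^ (n + 1)) /
        ((1 - Complex.I * omega3 ^ 2 * y⁻¹ * q ^ n) *
          (1 + Complex.I * omega3 * y * q ^ (n + 1)) *
          (1 + Complex.I * y⁻¹ * q ^ n) * (1 - Complex.I * y * q ^ (n + 1)) *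
          (1 - Complex.I * omega3 * y⁻¹ * q ^ n) *
          (1 + Complex.I * omega3 ^ 2 * y * q ^ (n + 1)))))
    - y * (∏' n : ℕ,
      ((1 - q ^ (n + 1)) ^ 2 * (1 + y⁻¹ ^ 2 * q ^ n) * (1 + y ^ 2 * q ^ (n + 1)) *
          (1 - Complex.I * y⁻¹ ^ 3 * q ^ n) * (1 + Complex.I * y ^ 3 * q ^ (n + 1)) /
        ((1 + Complex.I * omega3 ^ 2 * y⁻¹ * q ^ n) *
          (1 - Complex.I * omega3 * y * q ^ (n + 1)) *
          (1 - Complex.I * y⁻¹ * q ^ n) * (1 + Complex.I * y * q ^ (n + 1)) *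
          (1 + Complex.I * omega3 * y⁻¹ * q ^ n) *
          (1 - Complex.I * omega3 ^ 2 * y * q ^ (n + 1)))))
    = Complex.I * (Eta (6 * τ) * Theta2 τ (2 * z) /
        ((Eta τ) ^ 3 * Theta2 (6 * τ) (6 * z))) *
        (Theta1 τ (z + 1 / 12) * Theta1 τ (z + 1 / 4) * Theta1 τ (z + 5 / 12) *
            Theta1 τ (3 * z - 1 / 4) -
          Theta1 τ (z - 1 / 12) * Theta1 τ (z - 1 / 4) * Theta1 τ (z - 5 / 12) *
            Theta1 τ (3 * z + 1 / 4)) := by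
  have hq₁ : ‖q‖ < 1 := hq ▸ norm_cexp_two_pi_I_mul_lt_one (by linarith)
  have hy₁ : ‖y⁻¹‖ < 1 := by
    rw [hy, ← exp_neg, show -(2 * π * I * z) = 2 * π * I * -z by ring]
    exact norm_cexp_two_pi_I_mul_lt_one (by rwa [neg_im])
  have hyq₁ : ‖y * q‖ < 1 := by
    rw [hy, hq, ← exp_add, ← mul_add]
    exact norm_cexp_two_pi_I_mul_lt_one (by rw [add_im]; linarith)
  have hI := tprod_quotient_eq I_sq one_add_omega3_add_sq hq₁ hy₁ hyq₁
  have hnegI := tprod_quotient_eq (by rw [neg_sq, I_sq]) one_add_omega3_add_sq hq₁ hy₁ hyq₁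
  simp only [neg_mul, neg_neg, ← sub_eq_add_neg, sub_neg_eq_add] at hnegI
  rw [hI, hnegI, eta_mul_theta2_div_eq hq hy, prod_four_theta1_add_twelfths hq hy,
    prod_four_theta1_sub_twelfths hq hy]
  have hy₀ : y ≠ 0 := hy ▸ exp_ne_zero _
  have hA : cexp (π * I * τ) ≠ 0 := exp_ne_zero _
  field_simp
  ring_nf
  simp only [I_sq]
  ring
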